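/- Validity of Extensionality: over any complete Heyting algebra A, in the name universe V^A one has ‖∀x∀y(∀z(z∈x ↔ z∈y) → x ≈ y)‖ = 1, and conversely, for all A-names u, v and z: ‖u ≈ v‖ ≤ ‖z ∈ u‖ ⇨ ‖z ∈ v‖, so that ‖∀x∀y(x ≈ y → ∀z(z∈x ↔ z∈y))‖ = 1. -/

import Mathlib

universe u

/-- The universe `V^A` of `A`-names over a complete Heyting algebra `A`:
an `A`-name is a function from a set (of previously constructed `A`-names)
into `A`, here encoded by an indexing type `ι`, a family `elts` of names and
the family `val` of their attached truth values. -/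
inductive HName (A : Type u) : Type (u + 1) where
  | mk (ι : Type u) (elts : ι → HName A) (val : ι → A)

namespace HName

variable {A : Type u}

/-- The indexing type of (the domain of) a name. -/
def ι : HName A → Type u
  | mk ι _ _ => ι

/-- The members of (the domain of) a name. -/
def elts : (u : HName A) → u.ι → HName A
  | mk _ e _ => e

/-- The values attached by a name to the members of its domain. -/
def val : (u : HName A) → u.ι → A
  | mk _ _ v => v

/-- Ordinal rank of a name (used for the recursive definition of truth values). -/
noncomputable def rank : HName A → Ordinal.{u}
  | mk _ e _ => Ordinal.lsub fun i => (e i).rank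

theorem rank_lt {ι : Type u} (e : ι → HName A) (v : ι → A) (i : ι) :
    (e i).rank < (mk ι e v).rank := Ordinal.lt_lsub _ i

variable [Order.Frame A]

/-- The truth value `‖u ≈ v‖` of equality of two names, defined by the recursion
`‖u ≈ v‖ = ⨅_{x ∈ dom u} (u(x) ⇨ ‖x ∈ v‖) ⊓ ⨅_{y ∈ dom v} (v(y) ⇨ ‖y ∈ u‖)`,
where `‖x ∈ v‖ = ⨆_{y ∈ dom v} (v(y) ⊓ ‖y ≈ x‖)` is inlined. -/
noncomputable def eqVal : HName A → HName A → A
  | mk ι e a, mk κ f b =>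
      (⨅ i, a i ⇨ ⨆ j, b j ⊓ eqVal (f j) (e i)) ⊓
      (⨅ j, b j ⇨ ⨆ i, a i ⊓ eqVal (e i) (f j))
termination_by u v => max u.rank v.rank
decreasing_by
  · exact max_lt (lt_max_of_lt_right (rank_lt f b j)) (lt_max_of_lt_left (rank_lt e a i))
  · exact max_lt (lt_max_of_lt_left (rank_lt e a i)) (lt_max_of_lt_right (rank_lt f b j))

/-- The truth value `‖u ∈ v‖ = ⨆_{x ∈ dom v} (v(x) ⊓ ‖x ≈ u‖)` of membership. -/
noncomputable def memVal (u v : HName A) : A :=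
  ⨆ j : v.ι, v.val j ⊓ eqVal (v.elts j) u

/-!
`eqVal` is an equivalence, transitivity being proved by induction on names through
two substitution properties of `memVal` that each reduce to transitivity one level
down; hence it is a congruence for `memVal`. Conversely `u(x) ≤ ‖x ∈ u‖`, so agreement
of `‖z ∈ u‖` and `‖z ∈ v‖` on the members `z` of `u` and `v` already forces `‖u ≈ v‖`.
-/

theorem eqVal_def (u v : HName A) :
    eqVal u v = (⨅ i, u.val i ⇨ memVal (u.elts i) v) ⊓
      (⨅ j, v.val j ⇨ memVal (v.elts j) u) := by
  cases u; cases v; rw [eqVal]; rfl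

theorem le_eqVal_iff {c : A} {u v : HName A} :
    c ≤ eqVal u v ↔ (∀ i, c ⊓ u.val i ≤ memVal (u.elts i) v) ∧
      ∀ j, c ⊓ v.val j ≤ memVal (v.elts j) u := by
  simp only [eqVal_def, le_inf_iff, le_iInf_iff, le_himp_iff]

theorem eqVal_comm (u v : HName A) : eqVal u v = eqVal v u := by
  rw [eqVal_def, eqVal_def, inf_comm]

theorem eqVal_inf_val_le (u v : HName A) (i : u.ι) :
    eqVal u v ⊓ u.val i ≤ memVal (u.elts i) v :=
  (le_eqVal_iff.1 le_rfl).1 i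

theorem eqVal_self (u : HName A) : eqVal u u = ⊤ := by
  induction u with
  | mk ι e a ih =>
    have h : ∀ i, ⊤ ⊓ a i ≤ memVal (e i) (mk ι e a) := fun i =>
      le_iSup_of_le (f := fun j => a j ⊓ eqVal (e j) (e i)) i
        (by rw [ih i, top_inf_eq, inf_top_eq])
    exact top_le_iff.1 (le_eqVal_iff.2 ⟨h, h⟩)

theorem val_le_memVal (u : HName A) (i : u.ι) : u.val i ≤ memVal (u.elts i) u :=
  le_iSup_of_le i (by rw [eqVal_self, inf_top_eq])

theorem memVal_inf_eqVal_le_of_trans_left {a b w : HName A}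
    (h : ∀ j, eqVal (w.elts j) a ⊓ eqVal a b ≤ eqVal (w.elts j) b) :
    memVal a w ⊓ eqVal a b ≤ memVal b w := by
  rw [memVal, iSup_inf_eq]
  exact iSup_le fun j => le_iSup_of_le j ((inf_assoc _ _ _).le.trans (inf_le_inf_left _ (h j)))

theorem memVal_inf_eqVal_le_of_trans_right {a y z : HName A}
    (h : ∀ j k, eqVal (z.elts k) (y.elts j) ⊓ eqVal (y.elts j) a ≤ eqVal (z.elts k) a) :
    memVal a y ⊓ eqVal y z ≤ memVal a z := by
  rw [memVal, iSup_inf_eq]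
  refine iSup_le fun j => ?_
  calc y.val j ⊓ eqVal (y.elts j) a ⊓ eqVal y z
      = eqVal y z ⊓ y.val j ⊓ eqVal (y.elts j) a := by ac_rfl
    _ ≤ memVal (y.elts j) z ⊓ eqVal (y.elts j) a := inf_le_inf_right _ (eqVal_inf_val_le y z j)
    _ ≤ memVal a z := memVal_inf_eqVal_le_of_trans_left (h j)

theorem eqVal_trans (x y z : HName A) : eqVal x y ⊓ eqVal y z ≤ eqVal x z := by
  induction x generalizing y z with
  | mk ι e a ih =>
    -- induction on `x` alone suffices: both halves only need transitivity for triples whose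
    -- first entry is a member of `x`, up to `eqVal_comm`
    set x := mk ι e a
    refine le_eqVal_iff.2 ⟨fun i => ?_, fun k => ?_⟩
    · calc eqVal x y ⊓ eqVal y z ⊓ x.val i
          = eqVal x y ⊓ x.val i ⊓ eqVal y z := by ac_rfl
        _ ≤ memVal (e i) y ⊓ eqVal y z := inf_le_inf_right _ (eqVal_inf_val_le x y i)
        _ ≤ memVal (e i) z := memVal_inf_eqVal_le_of_trans_right fun j k => by
            rw [eqVal_comm (z.elts k), eqVal_comm _ (e i), eqVal_comm (z.elts k), inf_comm]
            exact ih i _ _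
    · calc eqVal x y ⊓ eqVal y z ⊓ z.val k
          = eqVal z y ⊓ z.val k ⊓ eqVal y x := by rw [eqVal_comm y z, eqVal_comm x y]; ac_rfl
        _ ≤ memVal (z.elts k) y ⊓ eqVal y x := inf_le_inf_right _ (eqVal_inf_val_le z y k)
        _ ≤ memVal (z.elts k) x := memVal_inf_eqVal_le_of_trans_right fun j i => ih i _ _

theorem memVal_inf_eqVal_le (z u v : HName A) : memVal z u ⊓ eqVal u v ≤ memVal z v :=
  memVal_inf_eqVal_le_of_trans_right fun _ _ => eqVal_trans _ _ _

theorem eqVal_le_memVal_himp (u v z : HName A) : eqVal u v ≤ memVal z u ⇨ memVal z v :=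
  le_himp_iff.2 (inf_comm (memVal z u) _ ▸ memVal_inf_eqVal_le z u v)

theorem iInf_memVal_himp_le_eqVal (u v : HName A) :
    (⨅ z, (memVal z u ⇨ memVal z v) ⊓ (memVal z v ⇨ memVal z u)) ≤ eqVal u v := by
  refine le_eqVal_iff.2 ⟨fun i => ?_, fun j => ?_⟩
  · exact le_himp_iff.1 (((iInf_le _ (u.elts i)).trans inf_le_left).trans
      (himp_le_himp_right (val_le_memVal u i)))
  · exact le_himp_iff.1 (((iInf_le _ (v.elts j)).trans inf_le_right).trans
      (himp_le_himp_right (val_le_memVal v j)))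

end HName

open HName in
/-- Validity of Extensionality in `V^A`: `‖∀x∀y(∀z(z∈x ↔ z∈y) → x ≈ y)‖ = 1`,
and conversely `‖u ≈ v‖ ≤ ‖z ∈ u‖ ⇨ ‖z ∈ v‖` for all names, whence
`‖∀x∀y(x ≈ y → ∀z(z∈x ↔ z∈y))‖ = 1`. -/
theorem extensionality_valid {A : Type u} [Order.Frame A] :
    ((⨅ u : HName A, ⨅ v : HName A,
        (⨅ z : HName A, (memVal z u ⇨ memVal z v) ⊓ (memVal z v ⇨ memVal z u)) ⇨
          eqVal u v) = ⊤) ∧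
      (∀ u v z : HName A, eqVal u v ≤ memVal z u ⇨ memVal z v) ∧
      ((⨅ u : HName A, ⨅ v : HName A,
        eqVal u v ⇨
          ⨅ z : HName A, (memVal z u ⇨ memVal z v) ⊓ (memVal z v ⇨ memVal z u)) = ⊤) := by
  simp only [iInf_eq_top, himp_eq_top_iff]
  refine ⟨iInf_memVal_himp_le_eqVal, eqVal_le_memVal_himp, fun u v => le_iInf fun z => ?_⟩
  exact le_inf (eqVal_le_memVal_himp u v z) (eqVal_comm u v ▸ eqVal_le_memVal_himp v u z)
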